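/- arXiv:2012.12710 — 2 statements merged into one kernel-verified Lean document; each statement's English description precedes it below -/
import Mathlib

section
/- The rank function r̂ of the union of matroids M_1, …, M_n with rank functions v_1, …, v_n satisfies r̂(S) = min over T ⊆ S of ( |S \ T| + Σ_{i=1}^n v_i(T) ) for all S ⊆ E. -/
structure FinMatroid (E : Type*) [Fintype E] [DecidableEq E] where
  Indep : Finset E → Prop
  empty_indep : Indep ∅
  subset_indep : ∀ ⦃I J : Finset E⦄, Indep I → J ⊆ I → Indep J
  aug : ∀ ⦃I J : Finset E⦄, Indep I → Indep J → I.card < J.card →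
    ∃ g ∈ J \ I, Indep (insert g I)

noncomputable def FinMatroid.rank {E : Type*} [Fintype E] [DecidableEq E]
    (M : FinMatroid E) (S : Finset E) : ℕ :=
  sSup {t | ∃ I : Finset E, I ⊆ S ∧ M.Indep I ∧ I.card = t}

/-- Maximin share `μ(k, S)` for a ℕ-valued valuation `v`: the maximum over
`k`-partitions `(Y 0, …, Y (k-1))` of `S` of `min_j v (Y j)`. -/
noncomputable def mmsN {E : Type*} [Fintype E] [DecidableEq E]
    (v : Finset E → ℕ) (k : ℕ) (S : Finset E) : ℕ :=
  sSup {t | ∃ Y : Fin k → Finset E,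
    (∀ a b, a ≠ b → Disjoint (Y a) (Y b)) ∧ Finset.univ.biUnion Y = S ∧
    ∀ j, t ≤ v (Y j)}

/-!
Weak duality gives `≤`: an independent set `I₁ ∪ ⋯ ∪ Iₙ ⊆ S` of the union has at most `|S \ T|`
elements outside `T`, and at most `vᵢ(T)` elements of each `Iᵢ` lie in `T`.

For `≥`, pass to `n` disjoint copies `E × Fin n` of the ground set. Independent sets of the union
are the projections of the sets independent both in the direct sum of the `Mᵢ` and in the
partition matroid allowing at most one copy of each element. Edmonds' matroid intersection
theorem, proved by induction on `S` (delete or contract an element; when both fail, uncross the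
two obstructions using submodularity of rank), yields a common independent set as large as the
min-max bound on `E × Fin n`. That bound dominates the one on `E`: for `U ⊆ S × Fin n` take
`T = {a | every copy of a lies in U}`.
-/

open Finset

namespace FinMatroid

variable {E : Type*} [Fintype E] [DecidableEq E]

section Rank

variable (M : FinMatroid E)

lemma bddAbove_card_indep_subset (S : Finset E) :
    BddAbove {t | ∃ I ⊆ S, M.Indep I ∧ I.card = t} :=
  ⟨S.card, fun _ ⟨_, hIS, _, hc⟩ => hc ▸ card_le_card hIS⟩

lemma card_le_rank {S I : Finset E} (hIS : I ⊆ S) (hI : M.Indep I) : I.card ≤ M.rank S :=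
  le_csSup (M.bddAbove_card_indep_subset S) ⟨I, hIS, hI, rfl⟩

lemma exists_indep_card_eq_rank (S : Finset E) : ∃ I ⊆ S, M.Indep I ∧ I.card = M.rank S :=
  Nat.sSup_mem (s := {t | ∃ I ⊆ S, M.Indep I ∧ I.card = t})
    ⟨0, ∅, empty_subset S, M.empty_indep, card_empty⟩ (M.bddAbove_card_indep_subset S)

lemma rank_le_of_forall_indep {S : Finset E} {k : ℕ}
    (h : ∀ I ⊆ S, M.Indep I → I.card ≤ k) : M.rank S ≤ k := by
  obtain ⟨I, hIS, hI, hc⟩ := M.exists_indep_card_eq_rank S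
  exact hc ▸ h I hIS hI

lemma rank_mono {S T : Finset E} (h : S ⊆ T) : M.rank S ≤ M.rank T :=
  M.rank_le_of_forall_indep fun _ hIS hI => M.card_le_rank (hIS.trans h) hI

lemma rank_empty : M.rank ∅ = 0 :=
  Nat.le_zero.mp <| M.rank_le_of_forall_indep fun _ hI _ => by simp [subset_empty.mp hI]

lemma exists_indep_superset_card_eq_rank {I S : Finset E} (hIS : I ⊆ S) (hI : M.Indep I) :
    ∃ B, I ⊆ B ∧ B ⊆ S ∧ M.Indep B ∧ B.card = M.rank S := by
  classical
  obtain ⟨B, hB, hBmax⟩ := exists_max_image {B ∈ S.powerset | I ⊆ B ∧ M.Indep B} card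
    ⟨I, by simp [hIS, hI]⟩
  simp only [mem_filter, mem_powerset] at hB hBmax
  obtain ⟨hBS, hIB, hBind⟩ := hB
  refine ⟨B, hIB, hBS, hBind, (M.card_le_rank hBS hBind).antisymm (not_lt.mp fun hlt => ?_)⟩
  obtain ⟨B₀, hB₀S, hB₀, hB₀c⟩ := M.exists_indep_card_eq_rank S
  obtain ⟨g, hg, hgB⟩ := M.aug hBind hB₀ (hB₀c ▸ hlt)
  rw [mem_sdiff] at hg
  have := hBmax _ ⟨insert_subset (hB₀S hg.1) hBS, hIB.trans (subset_insert g B), hgB⟩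
  rw [card_insert_of_notMem hg.2] at this
  omega

lemma rank_union_add_rank_inter_le (A B : Finset E) :
    M.rank (A ∪ B) + M.rank (A ∩ B) ≤ M.rank A + M.rank B := by
  obtain ⟨I, hIAB, hI, hIc⟩ := M.exists_indep_card_eq_rank (A ∩ B)
  obtain ⟨J, hIJ, hJ, hJind, hJc⟩ :=
    M.exists_indep_superset_card_eq_rank (hIAB.trans inter_subset_union) hI
  have hA : (J ∩ A).card ≤ M.rank A :=
    M.card_le_rank inter_subset_right (M.subset_indep hJind inter_subset_left)
  have hB : (J \ A ∪ I).card ≤ M.rank B := by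
    refine M.card_le_rank (union_subset ?_ (hIAB.trans inter_subset_right))
      (M.subset_indep hJind (union_subset sdiff_subset hIJ))
    intro x hx
    rw [mem_sdiff] at hx
    exact (mem_union.mp (hJ hx.1)).resolve_left hx.2
  have hdisj : Disjoint (J \ A) I :=
    disjoint_left.mpr fun x hx hxI => (mem_sdiff.mp hx).2 (mem_inter.mp (hIAB hxI)).1
  rw [card_union_of_disjoint hdisj] at hB
  have := card_inter_add_card_sdiff J A
  omega

lemma rank_insert_of_rank_singleton_eq_zero {e : E} (he : M.rank {e} = 0) (T : Finset E) :
    M.rank (insert e T) = M.rank T := by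
  refine (M.rank_le_of_forall_indep fun I hIT hI => ?_).antisymm (M.rank_mono (subset_insert e T))
  have heI : e ∉ I := fun heI =>
    absurd (M.card_le_rank subset_rfl (M.subset_indep hI (singleton_subset_iff.mpr heI)))
      (by simp [he])
  exact M.card_le_rank ((subset_insert_iff_of_notMem heI).mp hIT) hI

lemma indep_singleton_of_rank_pos {e : E} (he : 0 < M.rank {e}) : M.Indep {e} := by
  obtain ⟨I, hIe, hI, hIc⟩ := M.exists_indep_card_eq_rank {e}
  rcases subset_singleton_iff.mp hIe with rfl | rfl
  · simp at hIc
    omega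
  · exact hI

def contract (e : E) (he : M.Indep {e}) : FinMatroid E where
  Indep I := e ∉ I ∧ M.Indep (insert e I)
  empty_indep := ⟨notMem_empty e, by simpa using he⟩
  subset_indep _ _ hI hJI :=
    ⟨fun h => hI.1 (hJI h), M.subset_indep hI.2 (insert_subset_insert e hJI)⟩
  aug := by
    rintro I J ⟨heI, hI⟩ ⟨heJ, hJ⟩ hcard
    obtain ⟨g, hg, hgind⟩ := M.aug hI hJ (by
      rw [card_insert_of_notMem heI, card_insert_of_notMem heJ]
      omega)
    simp only [mem_sdiff, mem_insert, not_or] at hg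
    obtain ⟨hgJ | hgJ, hge, hgI⟩ := hg
    · exact absurd hgJ hge
    · refine ⟨g, mem_sdiff.mpr ⟨hgJ, hgI⟩, ?_, ?_⟩
      · simpa [not_or, heI] using Ne.symm hge
      · rwa [insert_comm]

lemma rank_contract_add_one {e : E} (he : M.Indep {e}) (T : Finset E) :
    (M.contract e he).rank T + 1 = M.rank (insert e T) := by
  refine le_antisymm ?_ ?_
  · obtain ⟨I, hIT, ⟨heI, hI⟩, hIc⟩ := (M.contract e he).exists_indep_card_eq_rank T
    have := M.card_le_rank (insert_subset_insert e hIT) hI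
    rw [card_insert_of_notMem heI] at this
    omega
  · obtain ⟨B, heB, hBT, hB, hBc⟩ := M.exists_indep_superset_card_eq_rank
      (singleton_subset_iff.mpr (mem_insert_self e T)) he
    have heB' : e ∈ B := singleton_subset_iff.mp heB
    have hind : (M.contract e he).Indep (B.erase e) :=
      ⟨notMem_erase e B, (insert_erase heB').symm ▸ hB⟩
    have := (M.contract e he).card_le_rank
      (fun x hx => (mem_insert.mp (hBT (mem_of_mem_erase hx))).resolve_left (ne_of_mem_erase hx))
      hind
    rw [card_erase_of_mem heB'] at this
    have := card_pos.mpr ⟨e, heB'⟩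
    omega

end Rank

section Intersection

variable {M₁ M₂ : FinMatroid E} {S T₀ T₁ : Finset E} {e : E} {k : ℕ}

lemma forall_le_rank_add_rank_of_loop_left (heS : e ∉ S) (he : M₁.rank {e} = 0)
    (hk : ∀ T ⊆ insert e S, k ≤ M₁.rank T + M₂.rank (insert e S \ T)) :
    ∀ T ⊆ S, k ≤ M₁.rank T + M₂.rank (S \ T) := fun T hT => by
  simpa [M₁.rank_insert_of_rank_singleton_eq_zero he, insert_sdiff_insert,
    sdiff_insert_of_notMem heS] using hk (insert e T) (insert_subset_insert e hT)

lemma forall_le_rank_add_rank_of_loop_right (heS : e ∉ S) (he : M₂.rank {e} = 0)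
    (hk : ∀ T ⊆ insert e S, k ≤ M₁.rank T + M₂.rank (insert e S \ T)) :
    ∀ T ⊆ S, k ≤ M₁.rank T + M₂.rank (S \ T) := fun T hT => by
  simpa [M₂.rank_insert_of_rank_singleton_eq_zero he,
    insert_sdiff_of_notMem S (fun h => heS (hT h))] using hk T (hT.trans (subset_insert e S))

/-- Uncrossing by submodularity: if deleting `e` breaks the min-max bound (witness `T₀`),
contracting `e` keeps it. -/
lemma lt_rank_insert_add_rank_insert (heS : e ∉ S)
    (hk : ∀ T ⊆ insert e S, k ≤ M₁.rank T + M₂.rank (insert e S \ T))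
    (hT₀ : T₀ ⊆ S) (h₀ : M₁.rank T₀ + M₂.rank (S \ T₀) < k) (hT₁ : T₁ ⊆ S) :
    k < M₁.rank (insert e T₁) + M₂.rank (insert e (S \ T₁)) := by
  have heT₀ : e ∉ T₀ := fun h => heS (hT₀ h)
  have h₁ := M₁.rank_union_add_rank_inter_le T₀ (insert e T₁)
  have h₂ := M₂.rank_union_add_rank_inter_le (S \ T₀) (insert e (S \ T₁))
  have hunion := hk (insert e (T₀ ∪ T₁))
    (insert_subset_insert e (union_subset hT₀ hT₁))
  have hinter := hk (T₀ ∩ T₁) ((inter_subset_left.trans hT₀).trans (subset_insert e S))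
  rw [union_insert, inter_insert_of_notMem heT₀] at h₁
  rw [union_insert, inter_insert_of_notMem (fun h => heS (mem_sdiff.mp h).1),
    ← sdiff_inter_distrib_right, ← sdiff_union_distrib] at h₂
  rw [insert_sdiff_insert, sdiff_insert_of_notMem heS] at hunion
  rw [insert_sdiff_of_notMem S (fun h => heT₀ (mem_inter.mp h).1)] at hinter
  omega

theorem exists_common_indep_of_forall_le (M₁ M₂ : FinMatroid E) (S : Finset E) (k : ℕ)
    (hk : ∀ T ⊆ S, k ≤ M₁.rank T + M₂.rank (S \ T)) :
    ∃ I ⊆ S, M₁.Indep I ∧ M₂.Indep I ∧ k ≤ I.card := by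
  induction S using Finset.induction_on generalizing M₁ M₂ k with
  | empty =>
    exact ⟨∅, subset_rfl, M₁.empty_indep, M₂.empty_indep, by simpa [rank_empty] using hk ∅⟩
  | insert e S heS ih =>
    by_cases hdel : ∀ T ⊆ S, k ≤ M₁.rank T + M₂.rank (S \ T)
    · obtain ⟨I, hIS, hI₁, hI₂, hIk⟩ := ih M₁ M₂ k hdel
      exact ⟨I, hIS.trans (subset_insert e S), hI₁, hI₂, hIk⟩
    push Not at hdel
    obtain ⟨T₀, hT₀, h₀⟩ := hdel
    have he₁ : M₁.Indep {e} := M₁.indep_singleton_of_rank_pos <| Nat.pos_of_ne_zero fun h =>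
      (h₀.trans_le (forall_le_rank_add_rank_of_loop_left heS h hk T₀ hT₀)).false
    have he₂ : M₂.Indep {e} := M₂.indep_singleton_of_rank_pos <| Nat.pos_of_ne_zero fun h =>
      (h₀.trans_le (forall_le_rank_add_rank_of_loop_right heS h hk T₀ hT₀)).false
    obtain ⟨I, hIS, ⟨heI, hI₁⟩, ⟨-, hI₂⟩, hIk⟩ :=
      ih (M₁.contract e he₁) (M₂.contract e he₂) (k - 1) fun T hT => by
        have := lt_rank_insert_add_rank_insert heS hk hT₀ h₀ hT
        have := M₁.rank_contract_add_one he₁ T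
        have := M₂.rank_contract_add_one he₂ (S \ T)
        omega
    refine ⟨insert e I, insert_subset_insert e hIS, hI₁, hI₂, ?_⟩
    rw [card_insert_of_notMem heI]
    omega

end Intersection

section Union

variable {n : ℕ}

def fiber (I : Finset (E × Fin n)) (i : Fin n) : Finset E := {a | (a, i) ∈ I}

@[simp]
lemma mem_fiber {I : Finset (E × Fin n)} {i : Fin n} {a : E} : a ∈ fiber I i ↔ (a, i) ∈ I := by
  simp [fiber]

lemma fiber_mono {I J : Finset (E × Fin n)} (h : I ⊆ J) (i : Fin n) : fiber I i ⊆ fiber J i :=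
  fun _ ha => mem_fiber.mpr (h (mem_fiber.mp ha))

lemma fiber_insert (p : E × Fin n) (I : Finset (E × Fin n)) (i : Fin n) :
    fiber (insert p I) i = if p.2 = i then insert p.1 (fiber I i) else fiber I i := by
  obtain ⟨b, j⟩ := p
  ext a
  split_ifs with h
  · subst h
    simp
  · simp [Prod.ext_iff, Ne.symm h]

lemma card_eq_sum_card_fiber (I : Finset (E × Fin n)) : I.card = ∑ i, (fiber I i).card := by
  rw [card_eq_sum_card_fiberwise fun p _ => mem_univ p.2]
  refine sum_congr rfl fun i _ => (card_nbij (·, i) (fun a ha => by simpa using ha)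
    (Prod.mk_left_injective i).injOn ?_).symm
  rintro ⟨a, j⟩ hp
  obtain ⟨hp, rfl⟩ : (a, j) ∈ I ∧ j = i := by simpa using hp
  exact ⟨a, by simpa using hp, rfl⟩

lemma biUnion_fiber (I : Finset (E × Fin n)) : univ.biUnion (fiber I) = I.image Prod.fst := by
  ext a
  simp

def sum (M : Fin n → FinMatroid E) : FinMatroid (E × Fin n) where
  Indep I := ∀ i, (M i).Indep (fiber I i)
  empty_indep i := by simpa [fiber] using (M i).empty_indep
  subset_indep _ _ hI hJI i := (M i).subset_indep (hI i) (fiber_mono hJI i)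
  aug I J hI hJ hcard := by
    rw [card_eq_sum_card_fiber, card_eq_sum_card_fiber] at hcard
    obtain ⟨i, -, hi⟩ := exists_lt_of_sum_lt hcard
    obtain ⟨g, hg, hgind⟩ := (M i).aug (hI i) (hJ i) hi
    rw [mem_sdiff, mem_fiber, mem_fiber] at hg
    refine ⟨(g, i), mem_sdiff.mpr hg, fun j => ?_⟩
    rw [fiber_insert]
    split_ifs with h
    · exact h ▸ hgind
    · exact hI j

lemma rank_sum (M : Fin n → FinMatroid E) (T : Finset (E × Fin n)) :
    (sum M).rank T = ∑ i, (M i).rank (fiber T i) := by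
  refine le_antisymm ((sum M).rank_le_of_forall_indep fun I hIT hI => ?_) ?_
  · rw [card_eq_sum_card_fiber]
    exact sum_le_sum fun i _ => (M i).card_le_rank (fiber_mono hIT i) (hI i)
  · choose B hBT hB hBc using fun i => (M i).exists_indep_card_eq_rank (fiber T i)
    have hfiber : ∀ i, fiber (univ.biUnion fun j => B j ×ˢ {j}) i = B i := fun i => by
      ext a
      simp
    have := (sum M).card_le_rank (I := univ.biUnion fun j => B j ×ˢ {j}) (S := T)
      (fun p hp => by
        obtain ⟨j, a, ha, rfl⟩ : ∃ j, ∃ a ∈ B j, (a, j) = p := by simpa using hp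
        exact mem_fiber.mp (hBT j ha)) fun i => (hfiber i).symm ▸ hB i
    rw [card_eq_sum_card_fiber] at this
    simpa only [hfiber, hBc] using this

def partition (E : Type*) [Fintype E] [DecidableEq E] (n : ℕ) : FinMatroid (E × Fin n) where
  Indep I := Set.InjOn Prod.fst (I : Set (E × Fin n))
  empty_indep := by simp
  subset_indep _ _ hI hJI := hI.mono (coe_subset.mpr hJI)
  aug I J hI hJ hcard := by
    obtain ⟨a, haJ, haI⟩ := not_subset.mp fun h : J.image Prod.fst ⊆ I.image Prod.fst => by
      have := card_le_card h
      rw [card_image_of_injOn hI, card_image_of_injOn hJ] at this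
      omega
    obtain ⟨p, hpJ, rfl⟩ := mem_image.mp haJ
    refine ⟨p, mem_sdiff.mpr ⟨hpJ, fun hpI => haI (mem_image_of_mem _ hpI)⟩, ?_⟩
    rw [coe_insert, Set.injOn_insert fun hpI => haI (mem_image_of_mem _ hpI)]
    exact ⟨hI, by simpa using haI⟩

lemma rank_partition (U : Finset (E × Fin n)) :
    (partition E n).rank U = (U.image Prod.fst).card := by
  refine le_antisymm ((partition E n).rank_le_of_forall_indep fun I hIU hI => ?_) ?_
  · rw [← card_image_of_injOn hI]
    exact card_le_card (image_subset_image hIU)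
  · obtain ⟨I, hIU, hI, himage⟩ := exists_subset_injOn_image_eq_of_surjOn (U : Set (E × Fin n))
      (U.image Prod.fst) (by simpa using Set.surjOn_image Prod.fst (U : Set (E × Fin n)))
    rw [← himage, card_image_of_injOn hI]
    exact (partition E n).card_le_rank (coe_subset.mp hIU) hI

lemma card_biUnion_le_card_sdiff_add_sum_rank (M : Fin n → FinMatroid E)
    {I : Fin n → Finset E} (hI : ∀ i, (M i).Indep (I i)) {S : Finset E}
    (hIS : univ.biUnion I ⊆ S) (T : Finset E) :
    (univ.biUnion I).card ≤ (S \ T).card + ∑ i, (M i).rank T := by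
  have hout : (univ.biUnion I \ T).card ≤ (S \ T).card :=
    card_le_card (sdiff_subset_sdiff hIS subset_rfl)
  have hin : (univ.biUnion I ∩ T).card ≤ ∑ i, (M i).rank T := by
    rw [biUnion_inter]
    exact card_biUnion_le.trans <| sum_le_sum fun i _ =>
      (M i).card_le_rank inter_subset_right ((M i).subset_indep (hI i) inter_subset_left)
  have := card_sdiff_add_card_inter (univ.biUnion I) T
  omega

theorem exists_indep_le_card_biUnion (M : Fin n → FinMatroid E) (S : Finset E) (k : ℕ)
    (hk : ∀ T ⊆ S, k ≤ (S \ T).card + ∑ i, (M i).rank T) :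
    ∃ I : Fin n → Finset E, (∀ i, (M i).Indep (I i)) ∧ univ.biUnion I ⊆ S ∧
      k ≤ (univ.biUnion I).card := by
  have hk' : ∀ U ⊆ S ×ˢ univ,
      k ≤ (sum M).rank U + (partition E n).rank (S ×ˢ univ \ U) := by
    intro U _
    rw [rank_sum, rank_partition]
    let T := {a ∈ S | ∀ i, (a, i) ∈ U}
    have hrank : ∑ i, (M i).rank T ≤ ∑ i, (M i).rank (fiber U i) :=
      sum_le_sum fun i _ => (M i).rank_mono fun a ha => mem_fiber.mpr ((mem_filter.mp ha).2 i)
    have hcard : (S \ T).card ≤ ((S ×ˢ univ \ U).image Prod.fst).card := by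
      refine card_le_card fun a ha => ?_
      obtain ⟨haS, haT⟩ := mem_sdiff.mp ha
      obtain ⟨i, hi⟩ : ∃ i, (a, i) ∉ U := by simpa [T, haS] using haT
      exact mem_image.mpr ⟨(a, i), by simp [haS, hi], rfl⟩
    have := hk T (filter_subset _ S)
    omega
  obtain ⟨I, hIS, hI, hIinj, hIk⟩ := exists_common_indep_of_forall_le _ _ _ k hk'
  refine ⟨fiber I, hI, ?_, ?_⟩
  · rw [biUnion_fiber]
    exact fun a ha => by
      obtain ⟨p, hp, rfl⟩ := mem_image.mp ha
      exact (mem_product.mp (hIS hp)).1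
  · rwa [biUnion_fiber, card_image_of_injOn hIinj]

end Union

end FinMatroid

open FinMatroid in
/-- Matroid union theorem: the rank of the union matroid satisfies the convolution
formula, a minimum over subsets `T` of `S` of `|S minus T| + Σ_i v_i(T)`. -/
theorem stmt4 {E : Type*} [Fintype E] [DecidableEq E] {n : ℕ}
    (M : Fin n → FinMatroid E) (Mu : FinMatroid E)
    (hMu : ∀ S : Finset E, Mu.Indep S ↔ ∃ I : Fin n → Finset E,
      (∀ i, (M i).Indep (I i)) ∧ S = Finset.univ.biUnion I) :
    ∀ S : Finset E,
      Mu.rank S = S.powerset.inf' ⟨∅, Finset.empty_mem_powerset S⟩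
        (fun T => (S \ T).card + ∑ i, (M i).rank T) := by
  intro S
  refine le_antisymm ?_ ?_
  · refine Mu.rank_le_of_forall_indep fun J hJS hJ => le_inf' _ _ fun T _ => ?_
    obtain ⟨I, hI, rfl⟩ := (hMu J).mp hJ
    exact card_biUnion_le_card_sdiff_add_sum_rank M hI hJS T
  · obtain ⟨I, hI, hIS, hIk⟩ := exists_indep_le_card_biUnion M S
      (S.powerset.inf' ⟨∅, empty_mem_powerset S⟩ fun T => (S \ T).card + ∑ i, (M i).rank T)
      fun T hT => inf'_le _ (mem_powerset.mpr hT)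
    exact hIk.trans (Mu.card_le_rank hIS ((hMu _).mpr ⟨I, hI, rfl⟩))
end

section
/- Let v be a monotone submodular function with v(∅)=0 and let A, B be disjoint sets of goods. If agent valuation v envies B from A in a way that is not EF1 (i.e., v(A) < v(B \ {g}) for every g ∈ B), then there exists a good g' ∈ B such that v(A) < v(A ∪ {g'}), and consequently v(A) < min{v(A ∪ {g'}), v(B \ {g'})} ≤ μ(2, A ∪ B). -/
/-- Maximin share `μ(k, S)` for a real-valued valuation. -/
noncomputable def mmsR {E : Type*} [Fintype E] [DecidableEq E]
    (v : Finset E → ℝ) (k : ℕ) (S : Finset E) : ℝ :=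
  sSup {t | ∃ Y : Fin k → Finset E,
    (∀ a b, a ≠ b → Disjoint (Y a) (Y b)) ∧ Finset.univ.biUnion Y = S ∧
    ∀ j, t ≤ v (Y j)}

/-!
If no good of `B` had a positive marginal value for `A`, then by submodularity (diminishing
returns) none would have one for any superset of `A`, so adding all of `B` to `A` one good at
a time would give `v (A ∪ B) ≤ v A`; this contradicts `v A < v (B.erase g) ≤ v (A ∪ B)`. Moving
such a good `g'` from `B` to `A` yields the 2-partition `(insert g' A, B.erase g')` of `A ∪ B`,
both of whose parts are worth more than `A`.
-/

open Finset

section Submodular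

variable {E : Type*} [DecidableEq E] {v : Finset E → ℝ}

theorem insert_add_le_insert_add_of_subset
    (hmono : ∀ ⦃S T : Finset E⦄, S ⊆ T → v S ≤ v T)
    (hsub : ∀ S T : Finset E, v (S ∪ T) + v (S ∩ T) ≤ v S + v T)
    {A S : Finset E} (hAS : A ⊆ S) (a : E) :
    v (insert a S) + v A ≤ v (insert a A) + v S := by
  have hunion : insert a A ∪ S = insert a S := by
    rw [insert_union, union_eq_right.mpr hAS]
  have hinter : A ⊆ insert a A ∩ S := subset_inter (subset_insert a A) hAS
  have := hsub (insert a A) S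
  rw [hunion] at this
  linarith [hmono hinter]

theorem union_le_of_forall_insert_le
    (hmono : ∀ ⦃S T : Finset E⦄, S ⊆ T → v S ≤ v T)
    (hsub : ∀ S T : Finset E, v (S ∪ T) + v (S ∩ T) ≤ v S + v T)
    {A B : Finset E} (h : ∀ g ∈ B, v (insert g A) ≤ v A) :
    v (A ∪ B) ≤ v A := by
  induction B using Finset.induction_on with
  | empty => simp
  | insert b B _ ih =>
    have hAB := ih fun g hg => h g (mem_insert_of_mem hg)
    have hb := h b (mem_insert_self b B)
    have := insert_add_le_insert_add_of_subset hmono hsub (subset_union_left : A ⊆ A ∪ B) b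
    rw [union_insert]
    linarith

theorem exists_lt_insert_of_lt_erase
    (hmono : ∀ ⦃S T : Finset E⦄, S ⊆ T → v S ≤ v T)
    (hsub : ∀ S T : Finset E, v (S ∪ T) + v (S ∩ T) ≤ v S + v T)
    {A B : Finset E} (hB : B.Nonempty) (henvy : ∀ g ∈ B, v A < v (B.erase g)) :
    ∃ g ∈ B, v A < v (insert g A) := by
  by_contra! h
  obtain ⟨g, hg⟩ := hB
  have := union_le_of_forall_insert_le hmono hsub h
  have := hmono ((erase_subset g B).trans (subset_union_right : B ⊆ A ∪ B))
  linarith [henvy g hg]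

end Submodular

section MaximinShare

variable {E : Type*} [Fintype E] [DecidableEq E]

theorem le_mmsR {v : Finset E → ℝ} {k : ℕ} [NeZero k] {S : Finset E} (Y : Fin k → Finset E)
    (hY : ∀ a b, a ≠ b → Disjoint (Y a) (Y b)) (hS : univ.biUnion Y = S) {t : ℝ}
    (ht : ∀ j, t ≤ v (Y j)) : t ≤ mmsR v k S := by
  obtain ⟨M, hM⟩ := (Set.finite_range v).bddAbove
  refine le_csSup ⟨M, ?_⟩ ⟨Y, hY, hS, ht⟩
  rintro t ⟨Z, -, -, hZ⟩
  exact (hZ 0).trans (hM ⟨Z 0, rfl⟩)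

theorem min_le_mmsR_two (v : Finset E → ℝ) {Y₁ Y₂ : Finset E} (h : Disjoint Y₁ Y₂) :
    min (v Y₁) (v Y₂) ≤ mmsR v 2 (Y₁ ∪ Y₂) := by
  refine le_mmsR ![Y₁, Y₂] ?_ ?_ ?_
  · intro a b hab
    fin_cases a <;> fin_cases b <;> simp_all [h.symm]
  · simp [Fin.univ_succ]
  · intro j
    fin_cases j
    · exact min_le_left _ _
    · exact min_le_right _ _

end MaximinShare

theorem stmt7_general {E : Type*} [Fintype E] [DecidableEq E] (v : Finset E → ℝ)
    (hmono : ∀ ⦃S T : Finset E⦄, S ⊆ T → v S ≤ v T)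
    (hsub : ∀ S T : Finset E, v (S ∪ T) + v (S ∩ T) ≤ v S + v T)
    (A B : Finset E) (hdisj : Disjoint A B) (hB : B.Nonempty)
    (henvy : ∀ g ∈ B, v A < v (B.erase g)) :
    ∃ g' ∈ B, v A < v (insert g' A) ∧
      v A < min (v (insert g' A)) (v (B.erase g')) ∧
      min (v (insert g' A)) (v (B.erase g')) ≤ mmsR v 2 (A ∪ B) := by
  obtain ⟨g', hg'B, hg'⟩ := exists_lt_insert_of_lt_erase hmono hsub hB henvy
  refine ⟨g', hg'B, hg', lt_min hg' (henvy g' hg'B), ?_⟩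
  have hpart : insert g' A ∪ B.erase g' = A ∪ B := by
    rw [insert_union, ← union_insert, insert_erase hg'B]
  have hdisj' : Disjoint (insert g' A) (B.erase g') :=
    disjoint_insert_left.mpr ⟨notMem_erase g' B, hdisj.mono_right (erase_subset g' B)⟩
  simpa only [hpart] using min_le_mmsR_two v hdisj'

/-- If a monotone submodular valuation envies `B` from `A` in a way violating EF1,
then some good `g'` of `B` strictly improves `A`, and hence
`v(A) < min (v (A ∪ {g'})) (v (B minus g')) ≤ μ(2, A ∪ B)`. -/
theorem stmt7 {E : Type*} [Fintype E] [DecidableEq E] (v : Finset E → ℝ)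
    (hnn : ∀ S, 0 ≤ v S) (h0 : v ∅ = 0)
    (hmono : ∀ ⦃S T : Finset E⦄, S ⊆ T → v S ≤ v T)
    (hsub : ∀ S T : Finset E, v (S ∪ T) + v (S ∩ T) ≤ v S + v T)
    (A B : Finset E) (hdisj : Disjoint A B) (hB : B.Nonempty)
    (henvy : ∀ g ∈ B, v A < v (B.erase g)) :
    ∃ g' ∈ B, v A < v (insert g' A) ∧
      v A < min (v (insert g' A)) (v (B.erase g')) ∧
      min (v (insert g' A)) (v (B.erase g')) ≤ mmsR v 2 (A ∪ B) :=
  stmt7_general v hmono hsub A B hdisj hB henvy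
end
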